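/- Let C be closed and convex, u ∈ C, v ∈ ℝⁿ, ζ ∈ (0,1], and let w be a feasible inexact projection of v onto C relative to u with forcing parameter ζ (i.e., w ∈ C and ‖w − v‖_D² ≤ ζ‖P_C^D(v) − v‖_D² + (1−ζ)‖u − v‖_D²). Then for all y ∈ C, ⟨D(v − w), y − w⟩ ≤ (1/2)‖w − y‖_D² + (1/2)[ζ‖P_C^D(v) − v‖_D² + (1−ζ)‖u − v‖_D² − ‖y − v‖_D²]. -/

import Mathlib

open RealInnerProductSpace

abbrev EucSp (n : ℕ) := EuclideanSpace ℝ (Fin n)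

noncomputable def dipr {n : ℕ} (D : Matrix (Fin n) (Fin n) ℝ) (x y : EucSp n) : ℝ :=
  ⟪(Matrix.toEuclideanLin D) x, y⟫

noncomputable def dnorm {n : ℕ} (D : Matrix (Fin n) (Fin n) ℝ) (x : EucSp n) : ℝ :=
  Real.sqrt (dipr D x x)

/-- `p` is the exact projection of `v` onto `C` in the `D`-norm. -/
def IsDProj {n : ℕ} (D : Matrix (Fin n) (Fin n) ℝ) (C : Set (EucSp n)) (v p : EucSp n) : Prop :=
  p ∈ C ∧ ∀ z ∈ C, dnorm D (p - v) ≤ dnorm D (z - v)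

section DInner

variable {n : ℕ} {D : Matrix (Fin n) (Fin n) ℝ}

lemma dipr_sub_left (x y z : EucSp n) : dipr D (x - y) z = dipr D x z - dipr D y z := by
  simp only [dipr, map_sub, inner_sub_left]

lemma dipr_sub_right (x y z : EucSp n) : dipr D x (y - z) = dipr D x y - dipr D x z := by
  simp only [dipr, inner_sub_right]

lemma dipr_comm (hD : D.IsHermitian) (x y : EucSp n) : dipr D x y = dipr D y x := by
  rw [dipr, dipr, Matrix.isSymmetric_toEuclideanLin_iff.mpr hD x y, real_inner_comm]

lemma dipr_self_nonneg (hD : D.PosSemidef) (x : EucSp n) : 0 ≤ dipr D x x :=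
  (Matrix.isPositive_toEuclideanLin_iff.mpr hD).inner_nonneg_left x

lemma dnorm_sq (hD : D.PosSemidef) (x : EucSp n) : dnorm D x ^ 2 = dipr D x x :=
  Real.sq_sqrt (dipr_self_nonneg hD x)

lemma two_mul_dipr_sub_sub (hD : D.IsHermitian) (v w y : EucSp n) :
    2 * dipr D (v - w) (y - w) =
      dipr D (w - y) (w - y) + dipr D (w - v) (w - v) - dipr D (y - v) (y - v) := by
  simp only [dipr_sub_left, dipr_sub_right, dipr_comm hD v w, dipr_comm hD v y,
    dipr_comm hD w y]
  ring

lemma dipr_sub_sub_eq_dnorm (hD : D.PosSemidef) (v w y : EucSp n) :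
    dipr D (v - w) (y - w) =
      (1 / 2) * dnorm D (w - y) ^ 2 + (1 / 2) * (dnorm D (w - v) ^ 2 - dnorm D (y - v) ^ 2) := by
  rw [dnorm_sq hD, dnorm_sq hD, dnorm_sq hD]
  linarith [two_mul_dipr_sub_sub hD.isHermitian v w y]

end DInner

theorem stmt5_general {n : ℕ} (C : Set (EucSp n))
    (D : Matrix (Fin n) (Fin n) ℝ) (hD : D.PosDef)
    (u : EucSp n) (v : EucSp n) (ζ : ℝ) (p : EucSp n) (w : EucSp n)
    (hw : (dnorm D (w - v)) ^ 2 ≤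
      ζ * (dnorm D (p - v)) ^ 2 + (1 - ζ) * (dnorm D (u - v)) ^ 2) :
    ∀ y ∈ C, dipr D (v - w) (y - w) ≤
      (1 / 2) * (dnorm D (w - y)) ^ 2 +
        (1 / 2) * (ζ * (dnorm D (p - v)) ^ 2 + (1 - ζ) * (dnorm D (u - v)) ^ 2
          - (dnorm D (y - v)) ^ 2) := by
  intro y _
  rw [dipr_sub_sub_eq_dnorm hD.posSemidef]
  linarith

theorem stmt5 {n : ℕ} (C : Set (EucSp n)) (hcl : IsClosed C) (hconv : Convex ℝ C)
    (D : Matrix (Fin n) (Fin n) ℝ) (hD : D.PosDef)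
    (u : EucSp n) (hu : u ∈ C) (v : EucSp n) (ζ : ℝ) (hζ : 0 < ζ ∧ ζ ≤ 1)
    (p : EucSp n) (hp : IsDProj D C v p)
    (w : EucSp n) (hwC : w ∈ C)
    (hw : (dnorm D (w - v)) ^ 2 ≤
      ζ * (dnorm D (p - v)) ^ 2 + (1 - ζ) * (dnorm D (u - v)) ^ 2) :
    ∀ y ∈ C, dipr D (v - w) (y - w) ≤
      (1 / 2) * (dnorm D (w - y)) ^ 2 +
        (1 / 2) * (ζ * (dnorm D (p - v)) ^ 2 + (1 - ζ) * (dnorm D (u - v)) ^ 2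
          - (dnorm D (y - v)) ^ 2) :=
  stmt5_general C D hD u v ζ p w hw
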